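/- arXiv:2303.12880 — 9 statements merged into one kernel-verified Lean document; each statement's English description precedes it below -/
import Mathlib

section
/- Let T be a truss, e ∈ T and n ∈ ℕ. Then for every f ∈ C^n(T), the composite δ^{n+1}_e(δ^n_e(f)) is the constant function T^{n+2} → T with value e; moreover, δ^n_e applied to the constant function with value e is again the constant function with value e (hence each δ^n_e is a homomorphism of the abelian groups obtained by retracting the heaps C^n(T) and C^{n+1}(T) at the constant function e). -/
/-- A truss: an abelian heap with an associative multiplication distributing
over the ternary heap operation on both sides. -/
class Truss (T : Type*) extends Mul T where
  hbr : T → T → T → T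
  hbr_assoc : ∀ a b c d f : T, hbr (hbr a b c) d f = hbr a b (hbr c d f)
  hbr_idl : ∀ a b : T, hbr a a b = b
  hbr_idr : ∀ a b : T, hbr b a a = b
  hbr_comm : ∀ a b c : T, hbr a b c = hbr c b a
  mul_assoc' : ∀ a b c : T, a * b * c = a * (b * c)
  mul_hbr_left : ∀ a b c d : T, a * hbr b c d = hbr (a * b) (a * c) (a * d)
  mul_hbr_right : ∀ a b c d : T, hbr b c d * a = hbr (b * a) (c * a) (d * a)

open Truss

section Cochains

variable {T : Type*} [Truss T]

/-- Negation in the retract group `G(T;e)`. -/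
def gneg (e x : T) : T := hbr e x e

/-- Addition in the retract group `G(T;e)`. -/
def gadd (e x y : T) : T := hbr x e y

/-- Sum of a list of elements in the retract group `G(T;e)`. -/
def gsum (e : T) : List T → T
  | [] => e
  | x :: xs => gadd e x (gsum e xs)

/-- `(-1)^k • x` in the retract group `G(T;e)`. -/
def spow (e : T) (k : ℕ) (x : T) : T := if k % 2 = 0 then x else gneg e x

/-- `n`-cochains on a truss `T`: functions `T^n → T`. -/
abbrev Cochain (T : Type*) (n : ℕ) := (Fin n → T) → T

/-- A cochain belongs to `C^n(T)` when it is a heap homomorphism in each argument. -/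
def IsMultiHeap {T : Type*} [Truss T] {n : ℕ} (f : Cochain T n) : Prop :=
  ∀ (i : Fin n) (a : Fin n → T) (x y z : T),
    f (Function.update a i (hbr x y z)) =
      hbr (f (Function.update a i x)) (f (Function.update a i y))
        (f (Function.update a i z))

/-- The argument tuple `(a_0, …, a_{i-1} a_i, …, a_n)` of the `i`-th inner face. -/
def faceArg {n : ℕ} (i : Fin n) (a : Fin (n + 1) → T) : Fin n → T :=
  fun j =>
    if (j : ℕ) < (i : ℕ) then a j.castSucc
    else if j = i then a j.castSucc * a j.succ
    else a j.succ

/-- The `e`-relative Hochschild coboundary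
`δ^n_e f(a_0,…,a_n) = -a_0 e + a_0 f(a_1,…,a_n) + Σ_{i=1}^n (-1)^i f(a_0,…,a_{i-1}a_i,…,a_n)
  + (-1)^{n+1} f(a_0,…,a_{n-1}) a_n + (-1)^n e a_n`,
with all operations in the retract group `G(T;e)`. -/
def delta (e : T) {n : ℕ} (f : Cochain T n) : Cochain T (n + 1) :=
  fun a =>
    gsum e
      ([gneg e (a 0 * e), a 0 * f (fun i => a i.succ)]
        ++ List.ofFn (fun i : Fin n => spow e ((i : ℕ) + 1) (f (faceArg i a)))
        ++ [spow e (n + 1) (f (fun i => a i.castSucc) * a (Fin.last n)),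
            spow e n (e * a (Fin.last n))])

end Cochains

/-!
In the retract group `G(T;e)`, left and right multiplication by `b` are affine maps whose linear
parts `x ↦ b x - b e` and `x ↦ x b - e b` make `G(T;e)` a `T`-bimodule. The correction terms
`-a₀e` and `(-1)ⁿ e aₙ` of `δ_e` turn it into the ordinary Hochschild coboundary `Σ (-1)ⁱ dᵢ` of
this bimodule, so `δ_e ∘ δ_e` vanishes because the cosimplicial identities
`dᵢ dⱼ = dⱼ₊₁ dᵢ` (`i ≤ j`) pair off the terms of the double sum.
-/

theorem Finset.alternating_double_sum_eq_zero {A : Type*} [AddCommGroup A] (m : ℕ) (h : ℕ → ℕ → A)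
    (H : ∀ i j, i ≤ j → j ≤ m → h i j = h (j + 1) i) :
    ∑ i ∈ Finset.range (m + 2), ∑ j ∈ Finset.range (m + 1), (-1 : ℤ) ^ (i + j) • h i j = 0 := by
  rw [← Finset.sum_product']
  refine Finset.sum_involution (fun p _ => if p.1 ≤ p.2 then (p.2 + 1, p.1) else (p.2, p.1 - 1))
    (fun ⟨i, j⟩ hij => ?_) (fun ⟨i, j⟩ _ _ => ?_) (fun ⟨i, j⟩ hij => ?_) (fun ⟨i, j⟩ _ => ?_)
  all_goals simp only [Finset.mem_product, Finset.mem_range] at *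
  · split_ifs with hle <;> dsimp only
    · rw [H i j hle (by omega), show j + 1 + i = i + j + 1 by omega, pow_succ, mul_neg_one,
        neg_smul, add_neg_cancel]
    · obtain ⟨k, rfl⟩ : ∃ k, i = k + 1 := Nat.exists_eq_add_one.mpr (by omega)
      rw [Nat.add_sub_cancel, H j k (by omega) (by omega), show k + 1 + j = j + k + 1 by omega,
        pow_succ, mul_neg_one, neg_smul, neg_add_cancel]
  · split_ifs <;> simp only [ne_eq, Prod.mk.injEq] <;> omega
  · split_ifs <;> omega
  · by_cases hle : i ≤ j
    · simp [hle]
    · simp only [hle, if_false]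
      rw [if_pos (by omega), Nat.sub_add_cancel (by omega)]

namespace Truss

section Retract

variable {T : Type*}

/-- The carrier of the retract group `G(T;e)`. -/
def Retract (_e : T) : Type _ := T

instance (e : T) : Zero (Retract e) := ⟨e⟩

def toRetract (e : T) : T ≃ Retract e := Equiv.refl T

variable [Truss T]

instance (e : T) : Add (Retract e) := ⟨fun x y => hbr (T := T) x e y⟩
instance (e : T) : Neg (Retract e) := ⟨fun x => hbr (T := T) e x e⟩

instance (e : T) : AddCommGroup (Retract e) where
  add_assoc x y z := hbr_assoc (T := T) x e y e z
  zero_add := hbr_idl (T := T) e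
  add_zero := hbr_idr (T := T) e
  neg_add_cancel (x : T) := by
    change hbr (hbr e x e) e x = e
    rw [hbr_assoc, hbr_idl, hbr_idr]
  add_comm x y := hbr_comm (T := T) x e y
  nsmul := nsmulRec
  zsmul := zsmulRec

theorem toRetract_symm_add (e : T) (x y : Retract e) :
    (toRetract e).symm (x + y) = hbr (T := T) ((toRetract e).symm x) e ((toRetract e).symm y) := rfl

theorem toRetract_hbr (e x y z : T) :
    toRetract e (hbr x y z) = toRetract e x - toRetract e y + toRetract e z := by
  change hbr x y z = hbr (hbr x e (hbr e y e)) e z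
  rw [← hbr_assoc x e e, hbr_idr, hbr_assoc x y e e z, hbr_idl]

theorem toRetract_gadd (e x y : T) : toRetract e (gadd e x y) = toRetract e x + toRetract e y :=
  rfl

theorem toRetract_gneg (e x : T) : toRetract e (gneg e x) = -toRetract e x := rfl

theorem toRetract_gsum (e : T) (l : List T) :
    toRetract e (gsum e l) = (l.map (toRetract e)).sum := by
  induction l with
  | nil => rfl
  | cons x xs ih => rw [gsum, toRetract_gadd, ih, List.map_cons, List.sum_cons]

theorem toRetract_spow (e : T) (k : ℕ) (x : T) :
    toRetract e (spow e k x) = (-1 : ℤ) ^ k • toRetract e x := by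
  rcases Nat.even_or_odd k with hk | hk
  · rw [spow, if_pos (Nat.even_iff.mp hk), hk.neg_one_pow, one_smul]
  · rw [spow, if_neg (by rw [Nat.odd_iff.mp hk]; omega), hk.neg_one_pow, neg_one_zsmul,
      toRetract_gneg]

end Retract

section Actions

variable {T : Type*} [Truss T]

def leftAct (e b : T) : Retract e →+ Retract e where
  toFun x := toRetract e (b * (toRetract e).symm x) - toRetract e (b * e)
  map_zero' := sub_self _
  map_add' x y := by
    rw [toRetract_symm_add, mul_hbr_left, toRetract_hbr]
    abel

def rightAct (e b : T) : Retract e →+ Retract e where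
  toFun x := toRetract e ((toRetract e).symm x * b) - toRetract e (e * b)
  map_zero' := sub_self _
  map_add' x y := by
    rw [toRetract_symm_add, mul_hbr_right, toRetract_hbr]
    abel

theorem leftAct_toRetract (e b x : T) :
    leftAct e b (toRetract e x) = toRetract e (b * x) - toRetract e (b * e) := rfl

theorem rightAct_toRetract (e b x : T) :
    rightAct e b (toRetract e x) = toRetract e (x * b) - toRetract e (e * b) := rfl

theorem leftAct_leftAct (e b c : T) (x : Retract e) :
    leftAct e b (leftAct e c x) = leftAct e (b * c) x := by
  obtain ⟨x, rfl⟩ := (toRetract e).surjective x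
  rw [leftAct_toRetract, map_sub, leftAct_toRetract, leftAct_toRetract, leftAct_toRetract,
    mul_assoc', mul_assoc']
  abel

theorem rightAct_rightAct (e b c : T) (x : Retract e) :
    rightAct e b (rightAct e c x) = rightAct e (c * b) x := by
  obtain ⟨x, rfl⟩ := (toRetract e).surjective x
  rw [rightAct_toRetract, map_sub, rightAct_toRetract, rightAct_toRetract, rightAct_toRetract,
    mul_assoc', mul_assoc']
  abel

theorem leftAct_rightAct (e b c : T) (x : Retract e) :
    leftAct e b (rightAct e c x) = rightAct e c (leftAct e b x) := by
  obtain ⟨x, rfl⟩ := (toRetract e).surjective x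
  rw [rightAct_toRetract, map_sub, leftAct_toRetract, leftAct_toRetract, leftAct_toRetract,
    map_sub, rightAct_toRetract, rightAct_toRetract, mul_assoc', mul_assoc']
  abel

end Actions

section Faces

variable {T : Type*} [Truss T] {n : ℕ}

theorem faceArg_zero_apply_zero (a : Fin (n + 2) → T) : faceArg 0 a 0 = a 0 * a 1 := rfl

theorem tail_faceArg_zero (a : Fin (n + 2) → T) :
    Fin.tail (faceArg 0 a) = Fin.tail (Fin.tail a) := by
  ext j
  simp [faceArg, Fin.tail, Fin.ext_iff]

theorem faceArg_succ_apply_zero (i : Fin n) (a : Fin (n + 2) → T) : faceArg i.succ a 0 = a 0 := by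
  simp [faceArg]

theorem tail_faceArg_succ (i : Fin n) (a : Fin (n + 2) → T) :
    Fin.tail (faceArg i.succ a) = faceArg i (Fin.tail a) := by
  ext j
  simp [faceArg, Fin.tail, Fin.ext_iff]

theorem faceArg_castSucc_apply_last (i : Fin n) (a : Fin (n + 2) → T) :
    faceArg i.castSucc a (Fin.last n) = a (Fin.last (n + 1)) := by
  simp [faceArg, Fin.ext_iff, i.isLt.not_gt, i.isLt.ne']

theorem init_faceArg_castSucc (i : Fin n) (a : Fin (n + 2) → T) :
    Fin.init (faceArg i.castSucc a) = faceArg i (Fin.init a) := by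
  ext j
  simp [faceArg, Fin.init, Fin.ext_iff]

theorem faceArg_last_apply_last (a : Fin (n + 2) → T) :
    faceArg (Fin.last n) a (Fin.last n) = a (Fin.last n).castSucc * a (Fin.last (n + 1)) := by
  simp [faceArg]

theorem init_faceArg_last (a : Fin (n + 2) → T) :
    Fin.init (faceArg (Fin.last n) a) = Fin.init (Fin.init a) := by
  ext j
  simp [faceArg, Fin.init]

theorem faceArg_faceArg (i j : Fin n) (hij : i ≤ j) (a : Fin (n + 2) → T) :
    faceArg j (faceArg i.castSucc a) = faceArg i (faceArg j.succ a) := by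
  ext k
  simp only [faceArg, Fin.ext_iff, Fin.val_succ, Fin.val_castSucc]
  split_ifs <;> first | omega | simp only [Fin.succ_castSucc, mul_assoc']

end Faces

section Cofaces

variable {T : Type*} [Truss T] (e : T) {n : ℕ}

abbrev RetractCochain (e : T) (n : ℕ) : Type _ := (Fin n → T) → Retract e

def leftFace : RetractCochain e n →+ RetractCochain e (n + 1) :=
  AddMonoidHom.pi fun a => (leftAct e (a 0)).comp (Pi.evalAddMonoidHom _ (Fin.tail a))

def innerFace (i : Fin n) : RetractCochain e n →+ RetractCochain e (n + 1) :=
  AddMonoidHom.pi fun a => Pi.evalAddMonoidHom _ (faceArg i a)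

def rightFace : RetractCochain e n →+ RetractCochain e (n + 1) :=
  AddMonoidHom.pi fun a => (rightAct e (a (Fin.last n))).comp (Pi.evalAddMonoidHom _ (Fin.init a))

variable {e}

theorem leftFace_apply (g : RetractCochain e n) (a : Fin (n + 1) → T) :
    leftFace e g a = leftAct e (a 0) (g (Fin.tail a)) := rfl

theorem innerFace_apply (i : Fin n) (g : RetractCochain e n) (a : Fin (n + 1) → T) :
    innerFace e i g a = g (faceArg i a) := rfl

theorem rightFace_apply (g : RetractCochain e n) (a : Fin (n + 1) → T) :
    rightFace e g a = rightAct e (a (Fin.last n)) (g (Fin.init a)) := rfl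

theorem leftFace_leftFace (g : RetractCochain e n) :
    leftFace e (leftFace e g) = innerFace e 0 (leftFace e g) := by
  ext a
  rw [innerFace_apply, leftFace_apply, leftFace_apply, leftFace_apply, leftAct_leftAct,
    faceArg_zero_apply_zero, tail_faceArg_zero]
  rfl

theorem leftFace_innerFace (i : Fin n) (g : RetractCochain e n) :
    leftFace e (innerFace e i g) = innerFace e i.succ (leftFace e g) := by
  ext a
  rw [innerFace_apply, leftFace_apply, leftFace_apply, innerFace_apply, faceArg_succ_apply_zero,
    tail_faceArg_succ]

theorem leftFace_rightFace (g : RetractCochain e n) :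
    leftFace e (rightFace e g) = rightFace e (leftFace e g) := by
  ext a
  rw [leftFace_apply, rightFace_apply, rightFace_apply, leftFace_apply, leftAct_rightAct,
    Fin.tail_init_eq_init_tail]
  rfl

theorem innerFace_innerFace {i j : Fin n} (hij : i ≤ j) (g : RetractCochain e n) :
    innerFace e i.castSucc (innerFace e j g) = innerFace e j.succ (innerFace e i g) := by
  ext a
  simp only [innerFace_apply, faceArg_faceArg i j hij]

theorem innerFace_rightFace (i : Fin n) (g : RetractCochain e n) :
    innerFace e i.castSucc (rightFace e g) = rightFace e (innerFace e i g) := by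
  ext a
  rw [innerFace_apply, rightFace_apply, rightFace_apply, innerFace_apply,
    faceArg_castSucc_apply_last, init_faceArg_castSucc]

theorem innerFace_last_rightFace (g : RetractCochain e n) :
    innerFace e (Fin.last n) (rightFace e g) = rightFace e (rightFace e g) := by
  ext a
  rw [innerFace_apply, rightFace_apply, rightFace_apply, rightFace_apply, rightAct_rightAct,
    faceArg_last_apply_last, init_faceArg_last]
  rfl

end Cofaces

section Coboundary

variable {T : Type*} [Truss T] (e : T) {n : ℕ}

/-- The coface map `dᵢ` of the Hochschild complex of `G(T;e)`, for `i ≤ n + 1`; every larger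
index also gives `d_{n+1}`. -/
def coface : ℕ → (RetractCochain e n →+ RetractCochain e (n + 1))
  | 0 => leftFace e
  | i + 1 => if h : i < n then innerFace e ⟨i, h⟩ else rightFace e

def coboundary : RetractCochain e n →+ RetractCochain e (n + 1) :=
  ∑ i ∈ Finset.range (n + 2), (-1 : ℤ) ^ i • coface e i

variable {e}

theorem coface_zero : coface e (n := n) 0 = leftFace e := rfl

theorem coface_succ_of_lt {i : ℕ} (h : i < n) : coface e (i + 1) = innerFace e ⟨i, h⟩ :=
  dif_pos h

theorem coface_succ_self : coface e (n := n) (n + 1) = rightFace e :=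
  dif_neg (lt_irrefl n)

theorem coface_coface {i j : ℕ} (hij : i ≤ j) (hj : j ≤ n + 1) (g : RetractCochain e n) :
    coface e i (coface e j g) = coface e (j + 1) (coface e i g) := by
  rcases i with _ | i <;> rcases j with _ | j
  · rw [coface_zero, coface_succ_of_lt n.succ_pos]
    exact leftFace_leftFace g
  · rcases lt_or_ge j n with hjn | hjn
    · rw [coface_zero, coface_succ_of_lt hjn, coface_succ_of_lt (Nat.succ_lt_succ hjn)]
      exact leftFace_innerFace ⟨j, hjn⟩ g
    · obtain rfl : n = j := by omega
      rw [coface_zero, coface_succ_self, coface_succ_self]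
      exact leftFace_rightFace g
  · omega
  · rcases lt_or_ge j n with hjn | hjn
    · have hin : i < n := by omega
      rw [coface_succ_of_lt hjn, coface_succ_of_lt (Nat.lt_succ_of_lt hin),
        coface_succ_of_lt (Nat.succ_lt_succ hjn), coface_succ_of_lt hin]
      exact innerFace_innerFace (Fin.mk_le_mk.mpr (by omega)) g
    · obtain rfl : n = j := by omega
      rcases lt_or_ge i n with hin | hin
      · rw [coface_succ_self, coface_succ_of_lt (Nat.lt_succ_of_lt hin), coface_succ_self,
          coface_succ_of_lt hin]
        exact innerFace_rightFace ⟨i, hin⟩ g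
      · obtain rfl : n = i := by omega
        rw [coface_succ_self, coface_succ_of_lt n.lt_succ_self, coface_succ_self]
        exact innerFace_last_rightFace g

theorem coboundary_eq_sum (g : RetractCochain e n) :
    coboundary e g = ∑ i ∈ Finset.range (n + 2), (-1 : ℤ) ^ i • coface e i g := by
  simp only [coboundary, AddMonoidHom.finsetSum_apply, AddMonoidHom.smul_apply]

theorem coboundary_coboundary (g : RetractCochain e n) : coboundary e (coboundary e g) = 0 := by
  rw [coboundary_eq_sum (coboundary e g)]
  simp only [coboundary_eq_sum g, map_sum, map_zsmul, Finset.smul_sum, smul_smul, ← pow_add]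
  exact Finset.alternating_double_sum_eq_zero (n + 1) (fun i j => coface e i (coface e j g))
    fun i j hij hj => coface_coface hij hj g

variable (e) in
theorem toRetract_comp_delta (f : Cochain T n) :
    toRetract e ∘ delta e f = coboundary e (toRetract e ∘ f) := by
  ext a
  rw [coboundary_eq_sum, Finset.sum_apply, Finset.sum_range_succ, Finset.sum_range_succ',
    Function.comp_apply, delta, toRetract_gsum]
  simp only [List.map_append, List.sum_append, List.map_cons, List.sum_cons, List.map_nil,
    List.sum_nil, List.map_ofFn, List.sum_ofFn, Finset.sum_range, Pi.smul_apply,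
    Function.comp_apply, coface_zero, coface_succ_self,
    fun i : Fin n => coface_succ_of_lt (e := e) i.isLt, Fin.eta, leftFace_apply,
    innerFace_apply, rightFace_apply, leftAct_toRetract, rightAct_toRetract, toRetract_gneg,
    toRetract_spow]
  rw [pow_zero, one_smul, pow_succ, mul_neg_one, smul_sub]
  simp only [neg_smul, Fin.tail_def, Fin.init_def]
  abel

end Coboundary

end Truss

theorem delta_delta_eq_const_general {T : Type*} [Truss T] (e : T) (n : ℕ)
    (f : Cochain T n) :
    (∀ a : Fin (n + 2) → T, delta e (delta e f) a = e) ∧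
      delta e (fun _ : Fin n → T => e) = fun _ => e := by
  constructor
  · intro a
    apply (toRetract e).injective
    have h := congrFun (toRetract_comp_delta e (delta e f)) a
    rwa [toRetract_comp_delta e f, coboundary_coboundary] at h
  · ext a
    apply (toRetract e).injective
    have h := congrFun (toRetract_comp_delta e fun _ : Fin n → T => e) a
    rwa [show toRetract e ∘ (fun _ : Fin n → T => e) = 0 from rfl, map_zero] at h

/-- For a truss `T`, `e ∈ T`, `n ∈ ℕ` and every `f ∈ C^n(T)`,
`δ^{n+1}_e (δ^n_e f)` is the constant function with value `e`, and `δ^n_e` of the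
constant function with value `e` is again the constant function with value `e`. -/
theorem delta_delta_eq_const {T : Type*} [Truss T] (e : T) (n : ℕ)
    (f : Cochain T n) (hf : IsMultiHeap f) :
    (∀ a : Fin (n + 2) → T, delta e (delta e f) a = e) ∧
      delta e (fun _ : Fin n → T => e) = fun _ => e :=
  delta_delta_eq_const_general e n f
end

section
/- Let T be a truss, e, e' ∈ T, n ≥ 1, and let σ : T → T be given by σ(a) = [a,e,e']. Then the map f ↦ σ∘f maps e-relative n-coboundaries to e'-relative n-coboundaries and e-relative n-cocycles to e'-relative n-cocycles: if f = δ^{n−1}_e(h) for some h ∈ C^{n−1}(T) then σ∘f = δ^{n−1}_{e'}(σ∘h), and if δ^n_e(f) is the constant function e then δ^n_{e'}(σ∘f) is the constant function e'. Moreover f ↦ σ∘f restricts to bijections Z^n_e(T) → Z^n_{e'}(T) and B^n_e(T) → B^n_{e'}(T), with inverse f ↦ τ∘f where τ(a) = [a,e',e]. -/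
open Truss

/-- The set `Z^n_e(T)` of `e`-relative `n`-cocycles: multi-heap cochains whose
coboundary is the constant function `e`. -/
def Zset (T : Type*) [Truss T] (e : T) (n : ℕ) : Set (Cochain T n) :=
  {f | IsMultiHeap f ∧ ∀ a, delta e f a = e}

/-- The set `B^{n+1}_e(T)` of `e`-relative `(n+1)`-coboundaries: images under
`δ^n_e` of multi-heap `n`-cochains. -/
def Bset (T : Type*) [Truss T] (e : T) (n : ℕ) : Set (Cochain T (n + 1)) :=
  {f | ∃ h : Cochain T n, IsMultiHeap h ∧ f = delta e h}

/-! In the retract group `G(T;e)` the translation `σ(a) = [a,e,e']` is `a ↦ a + e'`, and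
`G(T;e')` is the same group with origin moved to `e'`: its sums are `Σ (xᵢ - e') + e'` and its
negation is `x ↦ 2e' - x`. Expanding both coboundaries in `G(T;e)`, and using
`a(x + e') = ax - ae + ae'` for the multiplicative terms, the identity `σ ∘ δ_e f = δ_{e'}(σ ∘ f)`
becomes one between `ℤ`-linear combinations. As `σ` is a heap map with inverse `τ(a) = [a,e',e]`,
it preserves multi-heap cochains, and the claims about `Z` and `B` follow. -/

section RetractGroup

variable {T : Type*} [Truss T]

/-- `G(T;e)`: the type `T`, tagged by `e` so that it carries the retract group at `e`. -/
@[reducible] def Retract (T : Type*) [Truss T] (_e : T) : Type _ := T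

instance (e : T) : AddCommGroup (Retract T e) :=
  letI : Zero (Retract T e) := ⟨e⟩
  letI : Add (Retract T e) := ⟨gadd (T := T) e⟩
  letI : Neg (Retract T e) := ⟨gneg (T := T) e⟩
  { nsmul := nsmulRec
    zsmul := zsmulRec
    add_assoc := fun a b c => hbr_assoc (T := T) a e b e c
    zero_add := hbr_idl (T := T) e
    add_zero := hbr_idr (T := T) e
    add_comm := fun a b => hbr_comm (T := T) a e b
    neg_add_cancel := fun a => by
      change hbr (hbr e a e) e a = e
      rw [hbr_assoc, hbr_idl, hbr_idr] }

namespace Retract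

variable {e : T}

theorem hbr_eq (x y z : Retract T e) : (hbr x y z : Retract T e) = x - y + z := by
  change hbr (T := T) x y z = hbr (T := T) (hbr (T := T) x e (hbr e y e)) e z
  rw [← hbr_assoc, hbr_idr, hbr_assoc, hbr_idl]

variable (e' : Retract T e)

theorem hbr_translate (x : Retract T e) : (hbr x e e' : Retract T e) = x + e' := rfl

theorem gneg_eq (x : Retract T e) : (gneg e' x : Retract T e) = e' - x + e' :=
  hbr_eq _ _ _

theorem gsum_eq (l : List (Retract T e)) :
    (gsum e' l : Retract T e) = (l.map (· - e')).sum + e' := by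
  induction l with
  | nil => simp [gsum]
  | cons x l ih =>
    change hbr (T := T) x e' (gsum e' l) = _
    rw [hbr_eq, ih, List.map_cons, List.sum_cons]
    abel

theorem spow_eq (k : ℕ) (x : Retract T e) :
    (spow e' k x : Retract T e) = (-1 : ℤ) ^ k • (x - e') + e' := by
  rcases Nat.even_or_odd k with hk | hk
  · rw [spow, if_pos (Nat.even_iff.mp hk), hk.neg_one_pow]
    abel
  · rw [spow, if_neg (by rw [Nat.odd_iff.mp hk]; decide), hk.neg_one_pow, gneg_eq]
    abel

theorem gsum_self (l : List (Retract T e)) : (gsum e l : Retract T e) = l.sum :=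
  (gsum_eq 0 l).trans (by simp)

theorem spow_self (k : ℕ) (x : Retract T e) : (spow e k x : Retract T e) = (-1 : ℤ) ^ k • x :=
  (spow_eq 0 k x).trans (by simp)

theorem gneg_self (x : Retract T e) : (gneg e x : Retract T e) = -x := rfl

end Retract

end RetractGroup

section Translation

variable {T : Type*} [Truss T]

theorem hbr_delta (e e' : T) {n : ℕ} (f : Cochain T n) (a : Fin (n + 1) → T) :
    hbr (delta e f a) e e' = delta e' ((hbr · e e') ∘ f) a := by
  simp only [delta, Function.comp_apply, mul_hbr_left, mul_hbr_right]
  change @Eq (Retract T e) _ _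
  -- `Retract` is reducible, so the base point `e` must be fixed or these lemmas match at any base.
  rw [Retract.hbr_translate, Retract.gsum_self, Retract.gsum_eq (e := e) e']
  simp only [List.map_append, List.sum_append, List.map_cons, List.sum_cons, List.map_nil,
    List.sum_nil, List.map_ofFn, List.sum_ofFn, Function.comp_apply,
    Retract.spow_self (e := e), Retract.spow_eq (e := e) e', Retract.gneg_self (e := e),
    Retract.gneg_eq (e := e) e', Retract.hbr_translate (e := e) e', Retract.hbr_eq (e := e),
    add_sub_cancel_right]
  module

theorem comp_translate_delta (e e' : T) {n : ℕ} (f : Cochain T n) :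
    (hbr · e e') ∘ delta e f = delta e' ((hbr · e e') ∘ f) :=
  funext (hbr_delta e e' f)

theorem hbr_hbr_translate (e e' x y z : T) :
    hbr (hbr x y z) e e' = hbr (hbr x e e') (hbr y e e') (hbr z e e') := by
  change @Eq (Retract T e) _ _
  simp only [Retract.hbr_translate (e := e) e', Retract.hbr_eq (e := e)]
  module

theorem hbr_translate_translate (e e' x : T) : hbr (hbr x e e') e' e = x := by
  rw [hbr_assoc, hbr_idl, hbr_idr]

theorem IsMultiHeap.comp_translate {n : ℕ} {f : Cochain T n} (hf : IsMultiHeap f) (e e' : T) :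
    IsMultiHeap ((hbr · e e') ∘ f) := by
  intro i a x y z
  simp only [Function.comp_apply, hf i a x y z]
  exact hbr_hbr_translate ..

theorem comp_translate_mem_Zset {e : T} {n : ℕ} {f : Cochain T n} (hf : f ∈ Zset T e n)
    (e' : T) : (hbr · e e') ∘ f ∈ Zset T e' n := by
  refine ⟨hf.1.comp_translate e e', fun a => ?_⟩
  rw [← hbr_delta, hf.2 a, hbr_idl]

theorem comp_translate_mem_Bset {e : T} {n : ℕ} {f : Cochain T (n + 1)} (hf : f ∈ Bset T e n)
    (e' : T) : (hbr · e e') ∘ f ∈ Bset T e' n := by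
  obtain ⟨h, hh, rfl⟩ := hf
  exact ⟨_, hh.comp_translate e e', comp_translate_delta e e' h⟩

end Translation

/-- For a truss `T`, `e, e' ∈ T` and `n ≥ 1` (here the cochain level is
`n + 1`), with `σ(a) = [a,e,e']` and `τ(a) = [a,e',e]`, the map `f ↦ σ ∘ f` sends
`e`-relative coboundaries to `e'`-relative coboundaries (`σ ∘ δ^n_e h = δ^n_{e'}(σ ∘ h)`),
sends `e`-relative cocycles to `e'`-relative cocycles, and restricts to bijections
`Z^{n+1}_e(T) → Z^{n+1}_{e'}(T)` and `B^{n+1}_e(T) → B^{n+1}_{e'}(T)` with inverse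
`f ↦ τ ∘ f`. -/
theorem translate_cocycles_coboundaries {T : Type*} [Truss T] (e e' : T) (n : ℕ) :
    letI σ : T → T := fun a => hbr a e e'
    letI τ : T → T := fun a => hbr a e' e
    (∀ h : Cochain T n, IsMultiHeap h → σ ∘ delta e h = delta e' (σ ∘ h)) ∧
    (∀ f : Cochain T (n + 1), IsMultiHeap f → (∀ a, delta e f a = e) →
      ∀ a, delta e' (σ ∘ f) a = e') ∧
    (∀ f ∈ Zset T e (n + 1), σ ∘ f ∈ Zset T e' (n + 1)) ∧
    (∀ f ∈ Zset T e' (n + 1), τ ∘ f ∈ Zset T e (n + 1)) ∧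
    (∀ f ∈ Bset T e n, σ ∘ f ∈ Bset T e' n) ∧
    (∀ f ∈ Bset T e' n, τ ∘ f ∈ Bset T e n) ∧
    (∀ f : Cochain T (n + 1), τ ∘ (σ ∘ f) = f ∧ σ ∘ (τ ∘ f) = f) := by
  refine ⟨fun h _ => comp_translate_delta e e' h,
    fun f hf hδ => (comp_translate_mem_Zset ⟨hf, hδ⟩ e').2,
    fun f hf => comp_translate_mem_Zset hf e', fun f hf => comp_translate_mem_Zset hf e,
    fun f hf => comp_translate_mem_Bset hf e', fun f hf => comp_translate_mem_Bset hf e,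
    fun f => ⟨funext fun a => hbr_translate_translate e e' (f a),
      funext fun a => hbr_translate_translate e' e (f a)⟩⟩
end

section
/- Let T be a truss and e ∈ T. Then the map Θ sending a derivation D of T to the function a ↦ [D(a), a, e] is a bijection from the set of derivations of T onto the set of e-relative 1-cocycles, i.e. heap endomorphisms f : T → T satisfying [e, ae, af(b), f(ab), f(a)b, eb, e] = e for all a,b ∈ T; its inverse sends f to the map a ↦ [f(a), e, a]. Moreover Θ preserves the pointwise heap operation, so it is an isomorphism of heaps Der(T) ≅ Z^1_e(T). -/
open Truss

variable {T : Type*} [Truss T]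

/-- A heap endomorphism of the truss `T`. -/
def IsHeapEndo (N : T → T) : Prop :=
  ∀ a b c : T, N (hbr a b c) = hbr (N a) (N b) (N c)

/-- A derivation of the truss `T`: a heap endomorphism `D` with
`D(ab) = [D(a)b, ab, aD(b)]`. -/
def IsDerivation (D : T → T) : Prop :=
  IsHeapEndo D ∧ ∀ a b : T, D (a * b) = hbr (D a * b) (a * b) (a * D b)

/-- An `e`-relative 1-cocycle: a heap endomorphism `f` with
`[e, ae, af(b), f(ab), f(a)b, eb, e] = e` for all `a, b`. -/
def IsOneCocycle (e : T) (f : T → T) : Prop :=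
  IsHeapEndo f ∧ ∀ a b : T,
    hbr e (a * e) (hbr (a * f b) (f (a * b)) (hbr (f a * b) (e * b) e)) = e

/-! Fixing `e`, the heap becomes an abelian group with `[a, b, c] = a - b + c` and zero `e`, in
which left and right multiplication by a fixed element are affine: `a (x - y + z) = ax - ay + az`.
In these coordinates `Θ D = D - id` and `Θ⁻¹ f = f + id`, and expanding the cocycle condition for
`f = D - id` leaves exactly the Leibniz rule `D(ab) = D(a) b - ab + a D(b)`. That `Θ` preserves
the heap operation, and that heap endomorphisms are closed under it, is the medial law of abelian
heaps. -/

namespace Truss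

abbrev retract (e : T) : AddCommGroup T :=
  letI : Add T := ⟨fun a b => hbr a e b⟩
  letI : Zero T := ⟨e⟩
  letI : Neg T := ⟨fun a => hbr e a e⟩
  { nsmul := nsmulRec
    zsmul := zsmulRec
    add_assoc := fun a b c => hbr_assoc a e b e c
    zero_add := fun a => hbr_idl e a
    add_zero := fun a => hbr_idr e a
    add_comm := fun a b => hbr_comm a e b
    neg_add_cancel := fun a => by
      show hbr (hbr e a e) e a = e
      rw [hbr_assoc, hbr_idl, hbr_idr] }

theorem hbr_eq_sub_add (e a b c : T) :
    letI := retract e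
    hbr a b c = a - b + c := by
  let _ := retract e
  rw [sub_eq_add_neg]
  show hbr a b c = hbr (hbr a e (hbr e b e)) e c
  rw [← hbr_assoc a e e, hbr_idr, hbr_assoc, hbr_idl]

theorem mul_sub_add (e a x y z : T) :
    letI := retract e
    a * (x - y + z) = a * x - a * y + a * z := by
  simp only [← hbr_eq_sub_add, mul_hbr_left]

theorem sub_add_mul (e a x y z : T) :
    letI := retract e
    (x - y + z) * a = x * a - y * a + z * a := by
  simp only [← hbr_eq_sub_add, mul_hbr_right]

theorem hbr_hbr_cancel (x a b : T) : hbr (hbr x a b) b a = x := by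
  rw [hbr_assoc, hbr_idl, hbr_idr]

theorem hbr_medial (a b c a' b' c' a'' b'' c'' : T) :
    hbr (hbr a b c) (hbr a' b' c') (hbr a'' b'' c'') =
      hbr (hbr a a' a'') (hbr b b' b'') (hbr c c' c'') := by
  let _ := retract a
  simp only [hbr_eq_sub_add a]
  abel

end Truss

theorem isHeapEndo_id : IsHeapEndo (id : T → T) := fun _ _ _ => rfl

theorem isHeapEndo_const (c : T) : IsHeapEndo fun _ : T => c :=
  fun _ _ _ => (hbr_idl c c).symm

theorem IsHeapEndo.hbr {f g h : T → T} (hf : IsHeapEndo f) (hg : IsHeapEndo g)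
    (hh : IsHeapEndo h) : IsHeapEndo fun a => hbr (f a) (g a) (h a) := fun a b c => by
  simp only [hf a b c, hg a b c, hh a b c, hbr_medial]

theorem leibniz_iff_cocycle {e : T} {D f : T → T} (hΘ : ∀ a, f a = hbr (D a) a e) (a b : T) :
    D (a * b) = hbr (D a * b) (a * b) (a * D b) ↔
      hbr e (a * e) (hbr (a * f b) (f (a * b)) (hbr (f a * b) (e * b) e)) = e := by
  let _ := retract e
  have hcocycle : hbr e (a * e) (hbr (a * f b) (f (a * b)) (hbr (f a * b) (e * b) e)) =
      (D a * b - a * b + a * D b) - D (a * b) := by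
    have he : e = 0 := rfl
    simp only [hΘ, hbr_eq_sub_add e, mul_sub_add e, sub_add_mul e]
    -- `abel` treats `e` as an atom unless it is written as the zero of the retract
    simp only [he]
    abel
  rw [hcocycle, hbr_eq_sub_add e, eq_comm]
  exact sub_eq_zero.symm

/-- For a truss `T` and `e ∈ T`, the map `Θ : D ↦ (a ↦ [D(a), a, e])`
is a bijection from derivations of `T` onto `e`-relative 1-cocycles, with inverse
`f ↦ (a ↦ [f(a), e, a])`, and `Θ` preserves the pointwise heap operation; hence
`Der(T) ≅ Z^1_e(T)` as heaps. -/
theorem derivations_iso_one_cocycles (T : Type*) [Truss T] (e : T) :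
    letI Θ : (T → T) → (T → T) := fun D => fun a => hbr (D a) a e
    letI Θinv : (T → T) → (T → T) := fun f => fun a => hbr (f a) e a
    (∀ D : T → T, IsDerivation D → IsOneCocycle e (Θ D)) ∧
    (∀ f : T → T, IsOneCocycle e f → IsDerivation (Θinv f)) ∧
    (∀ D : T → T, IsDerivation D → Θinv (Θ D) = D) ∧
    (∀ f : T → T, IsOneCocycle e f → Θ (Θinv f) = f) ∧
    (∀ D₁ D₂ D₃ : T → T,
      Θ (fun a => hbr (D₁ a) (D₂ a) (D₃ a)) =
        fun a => hbr (Θ D₁ a) (Θ D₂ a) (Θ D₃ a)) := by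
  refine ⟨fun D hD => ⟨?_, ?_⟩, fun f hf => ⟨?_, ?_⟩, fun D _ => ?_, fun f _ => ?_,
    fun D₁ D₂ D₃ => ?_⟩
  · exact hD.1.hbr isHeapEndo_id (isHeapEndo_const e)
  · exact fun a b => (leibniz_iff_cocycle (fun _ => rfl) a b).1 (hD.2 a b)
  · exact hf.1.hbr (isHeapEndo_const e) isHeapEndo_id
  · exact fun a b =>
      (leibniz_iff_cocycle (fun c => (hbr_hbr_cancel (f c) e c).symm) a b).2 (hf.2 a b)
  · exact funext fun a => hbr_hbr_cancel (D a) a e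
  · exact funext fun a => hbr_hbr_cancel (f a) e a
  · exact funext fun a =>
      (isHeapEndo_id.hbr (isHeapEndo_const a) (isHeapEndo_const e)) (D₁ a) (D₂ a) (D₃ a)
end

section
/- Let A be an abelian group, n ≥ 2, and let f : A^n → A be a heap homomorphism in each argument, i.e. for every slot i, f(a_1,…,a_{i−1}, x − y + z, a_{i+1},…,a_n) = f(…,x,…) − f(…,y,…) + f(…,z,…). Suppose that for all a_0,…,a_n ∈ A, Σ_{i=1}^{n−1} (−1)^i f(a_0,…,a_{i−1},a_{i+1},…,a_n) = 0 (the argument a_i is omitted). Then the map g : A^{n−1} → A defined by g(a_0,…,a_{n−2}) = −f(a_0, 0, a_1,…,a_{n−2}) is a heap homomorphism in each argument and satisfies Σ_{i=1}^{n−2} (−1)^i g(a_0,…,a_{i−1},a_{i+1},…,a_{n−1}) = f(a_0,…,a_{n−1}) for all a_0,…,a_{n−1} ∈ A. -/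
/-!
Evaluate the cocycle identity at `(a₀, 0, a₁, …, a_{n-1})`. Omitting the inserted `0` gives
back `f a` (with sign `-1`), while every other inner face still has `0` in slot `1`, so it is a
value of `g` up to sign; the cocycle identity thus reads `-f a + δg a = 0`.
-/

/-- A function `A^n → A` on an abelian group that is a heap homomorphism
(`[x,y,z] = x - y + z`) in each argument. -/
def IsMultiHeapAdd {A : Type*} [AddCommGroup A] {n : ℕ} (f : (Fin n → A) → A) : Prop :=
  ∀ (i : Fin n) (a : Fin n → A) (x y z : A),
    f (Function.update a i (x - y + z)) =
      f (Function.update a i x) - f (Function.update a i y) + f (Function.update a i z)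

namespace Fin

variable {α : Type*} {n : ℕ}

theorem insertNth_one_eq_cons_cons (x : α) (b : Fin (n + 1) → α) :
    (insertNth 1 x b : Fin (n + 2) → α) = cons (b 0) (cons x (tail b) : Fin (n + 1) → α) := by
  rw [← succ_zero_eq_one, ← cons_self_tail b, insertNth_succ_cons, insertNth_zero']
  rfl

theorem removeNth_succ_succ_insertNth_one (q : Fin (n + 1)) (x : α) (a : Fin (n + 2) → α) :
    removeNth q.succ.succ (insertNth 1 x a : Fin (n + 3) → α) =
      (insertNth 1 x (removeNth q.succ a) : Fin (n + 2) → α) := by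
  ext j
  cases j using Fin.cases with
  | zero => simp [removeNth, insertNth_one_eq_cons_cons]
  | succ j => cases j using Fin.cases <;> simp [removeNth, insertNth_one_eq_cons_cons, tail]

end Fin

namespace IsMultiHeapAdd

variable {A : Type*} [AddCommGroup A] {n : ℕ}

theorem neg {f : (Fin n → A) → A} (hf : IsMultiHeapAdd f) : IsMultiHeapAdd (-f) := by
  intro i a x y z
  simp only [Pi.neg_apply, hf i a x y z]
  abel

theorem comp_insertNth {f : (Fin (n + 1) → A) → A} (hf : IsMultiHeapAdd f) (p : Fin (n + 1))
    (x : A) :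
    IsMultiHeapAdd fun b => f (Fin.insertNth p x b) := by
  intro i a u v w
  simp only [Fin.insertNth_update]
  exact hf _ _ u v w

end IsMultiHeapAdd

section Coboundary

variable {A : Type*} [AddCommGroup A] {n : ℕ}

/-- The `0`-relative Hochschild coboundary of `L(A)`:
`δ f (a₀, …, a_{n+1}) = Σ_{i=1}^{n} (-1)^i f(a₀, …, âᵢ, …, a_{n+1})`. -/
def leftProjCoboundary (f : (Fin (n + 1) → A) → A) (a : Fin (n + 2) → A) : A :=
  ∑ i : Fin n, ((-1 : ℤ) ^ ((i : ℕ) + 1)) • f (Fin.removeNth i.succ.castSucc a)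

theorem leftProjCoboundary_neg (f : (Fin (n + 1) → A) → A) :
    leftProjCoboundary (-f) = -leftProjCoboundary f := by
  ext a
  simp [leftProjCoboundary]

theorem leftProjCoboundary_insertNth_one (f : (Fin (n + 2) → A) → A) (x : A)
    (a : Fin (n + 2) → A) :
    leftProjCoboundary f (Fin.insertNth 1 x a) =
      -f a - leftProjCoboundary (fun b => f (Fin.insertNth 1 x b)) a := by
  rw [leftProjCoboundary, Fin.sum_univ_succ, leftProjCoboundary, sub_eq_add_neg,
    ← Finset.sum_neg_distrib]
  congr 1
  · simp
  · refine Finset.sum_congr rfl fun k _ => ?_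
    rw [← Fin.succ_castSucc, ← Fin.succ_castSucc, Fin.removeNth_succ_succ_insertNth_one,
      Fin.val_succ, pow_succ, mul_comm, mul_smul, neg_one_smul]

end Coboundary

/-- Let `A` be an abelian group, `n = m + 2 ≥ 2`, and let
`f : A^n → A` be a heap homomorphism in each argument such that
`Σ_{i=1}^{n-1} (-1)^i f(a_0,…,â_i,…,a_n) = 0` for all `a_0,…,a_n ∈ A`.
Then `g(a_0,…,a_{n-2}) = -f(a_0, 0, a_1,…,a_{n-2})` is a heap homomorphism in each
argument and `Σ_{i=1}^{n-2} (-1)^i g(a_0,…,â_i,…,a_{n-1}) = f(a_0,…,a_{n-1})`. -/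
theorem left_projection_cocycles_are_coboundaries {A : Type*} [AddCommGroup A]
    (m : ℕ) (f : (Fin (m + 2) → A) → A) (hf : IsMultiHeapAdd f)
    (hcoc : ∀ a : Fin (m + 3) → A,
      ∑ i : Fin (m + 1),
        ((-1 : ℤ) ^ ((i : ℕ) + 1)) • f (fun j => a ((i.succ.castSucc).succAbove j)) = 0) :
    letI g : (Fin (m + 1) → A) → A :=
      fun b => -f (Fin.cons (b 0) (Fin.cons (0 : A) (fun j : Fin m => b j.succ)))
    IsMultiHeapAdd g ∧
      ∀ a : Fin (m + 2) → A,
        ∑ i : Fin m,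
          ((-1 : ℤ) ^ ((i : ℕ) + 1)) • g (fun j => a ((i.succ.castSucc).succAbove j)) = f a := by
  set h : (Fin (m + 1) → A) → A := fun b => f (Fin.insertNth 1 0 b)
  have hg : (fun b : Fin (m + 1) → A =>
      -f (Fin.cons (b 0) (Fin.cons (0 : A) (fun j : Fin m => b j.succ)))) = -h := by
    ext b
    simp only [h, Pi.neg_apply, Fin.insertNth_one_eq_cons_cons]
    rfl
  refine hg ▸ ⟨(hf.comp_insertNth 1 0).neg, fun a => ?_⟩
  change leftProjCoboundary (-h) a = f a
  have hcoc_a : leftProjCoboundary f (Fin.insertNth 1 0 a) = 0 := hcoc _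
  rw [leftProjCoboundary_insertNth_one, sub_eq_zero] at hcoc_a
  rw [leftProjCoboundary_neg, Pi.neg_apply, ← hcoc_a, neg_neg]
end

section
/- Let T be a truss and P : T → T a heap endomorphism such that P(ab) = P(a)P(b) and P(P(a)) = P(a) for all a,b ∈ T. Then P is a Nijenhuis operator on T, i.e. P([P(a)b, P(ab), aP(b)]) = P(a)P(b) for all a,b ∈ T. -/
open Truss

/-- Let `T` be a truss and `P : T → T` a heap endomorphism with
`P(ab) = P(a)P(b)` and `P(P(a)) = P(a)`. Then `P` is a Nijenhuis operator:
`P([P(a)b, P(ab), aP(b)]) = P(a)P(b)` for all `a, b ∈ T`. -/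
theorem multiplicative_idempotent_is_nijenhuis {T : Type*} [Truss T] (P : T → T)
    (hheap : ∀ a b c : T, P (hbr a b c) = hbr (P a) (P b) (P c))
    (hmul : ∀ a b : T, P (a * b) = P a * P b)
    (hidem : ∀ a : T, P (P a) = P a) :
    ∀ a b : T, P (hbr (P a * b) (P (a * b)) (a * P b)) = P a * P b := by
  intro a b
  have hleft : P (P a * b) = P a * P b := by rw [hmul, hidem]
  have hmid : P (P (a * b)) = P a * P b := by rw [hidem, hmul]
  have hright : P (a * P b) = P a * P b := by rw [hmul, hidem]
  rw [hheap, hleft, hmid, hright, hbr_idl]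
end

section
/- Let R be an associative ring, I a two-sided ideal of R, and q ∈ R idempotent (q² = q). Let N̄ : I → I be an additive map such that for all x,y ∈ I: N̄(N̄(x)y − N̄(xy) + xN̄(y)) = N̄(x)N̄(y), N̄(xq) = N̄(x)q and N̄(qx) = qN̄(x). Define N on the coset q + I by N(q + x) = q + N̄(x). Then N is a Nijenhuis operator on the truss T(I;q) = q + I: for all u, v ∈ q + I one has uv ∈ q + I and w := N(u)v − N(uv) + uN(v) ∈ q + I, and N(w) = N(u)N(v). -/
/-!
Every element of `q + I` is `q + x` with `x ∈ I`, and idempotence of `q` gives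
`(q + x)(q + y) = q + (qy + xq + xy)`. Since `N̄` is additive on `I` and commutes with
multiplication by `q` on either side, it maps the `I`-part `qy + xq + z` of such a product to
`qN̄(y) + N̄(x)q + N̄(z)`. Expanding `w = N(u)v − N(uv) + uN(v)` the same way yields
`w = q + (qy + xq + B)` with `B = N̄(x)y − N̄(xy) + xN̄(y)`, so
`N(w) = q + (qN̄(y) + N̄(x)q + N̄(x)N̄(y)) = (q + N̄(x))(q + N̄(y)) = N(u)N(v)`.
-/

/-- The lift of `N̄ : I → I` to the coset `q + I`: `N(u) = q + N̄(u - q)`. -/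
def liftN {R : Type*} [NonUnitalRing R] (q : R) (Nb : R → R) : R → R :=
  fun u => q + Nb (u - q)

section CosetTruss

variable {R : Type*} [NonUnitalRing R]

theorem idem_add_mul_idem_add {q : R} (hq : q * q = q) (x y : R) :
    (q + x) * (q + y) = q + (q * y + x * q + x * y) := by
  rw [add_mul, mul_add, mul_add, hq]
  abel

theorem liftN_idem_add (q : R) (Nb : R → R) (x : R) : liftN q Nb (q + x) = q + Nb x := by
  simp only [liftN, add_sub_cancel_left]

variable {I : AddSubgroup R}

theorem idem_mul_add_mul_idem_add_mem (hIl : ∀ r x : R, x ∈ I → r * x ∈ I)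
    (hIr : ∀ r x : R, x ∈ I → x * r ∈ I) (q : R) {x y z : R} (hx : x ∈ I) (hy : y ∈ I)
    (hz : z ∈ I) : q * y + x * q + z ∈ I :=
  I.add_mem (I.add_mem (hIl q y hy) (hIr q x hx)) hz

theorem map_idem_mul_add_mul_idem_add (hIl : ∀ r x : R, x ∈ I → r * x ∈ I)
    (hIr : ∀ r x : R, x ∈ I → x * r ∈ I) {q : R} {Nb : R → R}
    (hNadd : ∀ x ∈ I, ∀ y ∈ I, Nb (x + y) = Nb x + Nb y)
    (hNq1 : ∀ x ∈ I, Nb (x * q) = Nb x * q) (hNq2 : ∀ x ∈ I, Nb (q * x) = q * Nb x)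
    {x y z : R} (hx : x ∈ I) (hy : y ∈ I) (hz : z ∈ I) :
    Nb (q * y + x * q + z) = q * Nb y + Nb x * q + Nb z := by
  rw [hNadd _ (I.add_mem (hIl q y hy) (hIr q x hx)) _ hz,
    hNadd _ (hIl q y hy) _ (hIr q x hx), hNq1 x hx, hNq2 y hy]

theorem liftN_nijenhuis_expr (hIl : ∀ r x : R, x ∈ I → r * x ∈ I)
    (hIr : ∀ r x : R, x ∈ I → x * r ∈ I) {q : R} (hq : q * q = q) {Nb : R → R}
    (hNadd : ∀ x ∈ I, ∀ y ∈ I, Nb (x + y) = Nb x + Nb y)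
    (hNq1 : ∀ x ∈ I, Nb (x * q) = Nb x * q) (hNq2 : ∀ x ∈ I, Nb (q * x) = q * Nb x)
    {x y : R} (hx : x ∈ I) (hy : y ∈ I) :
    liftN q Nb (q + x) * (q + y) - liftN q Nb ((q + x) * (q + y)) + (q + x) * liftN q Nb (q + y)
      = q + (q * y + x * q + (Nb x * y - Nb (x * y) + x * Nb y)) := by
  rw [idem_add_mul_idem_add hq x y, liftN_idem_add, liftN_idem_add, liftN_idem_add,
    map_idem_mul_add_mul_idem_add hIl hIr hNadd hNq1 hNq2 hx hy (hIl x y hy),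
    idem_add_mul_idem_add hq, idem_add_mul_idem_add hq]
  abel

end CosetTruss

/-- Let `R` be an associative ring, `I` a two-sided ideal of `R`,
`q ∈ R` an idempotent, and `N̄ : I → I` an additive Nijenhuis operator on `I`
satisfying `N̄(xq) = N̄(x)q` and `N̄(qx) = qN̄(x)`. Then `N(q + x) = q + N̄(x)` is a
Nijenhuis operator on the truss `T(I;q) = q + I`: for all `u, v ∈ q + I` one has
`uv ∈ q + I`, `w := N(u)v − N(uv) + uN(v) ∈ q + I`, and `N(w) = N(u)N(v)`. -/
theorem lift_nijenhuis_to_coset_truss {R : Type*} [NonUnitalRing R]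
    (I : AddSubgroup R)
    (hIl : ∀ r x : R, x ∈ I → r * x ∈ I)
    (hIr : ∀ r x : R, x ∈ I → x * r ∈ I)
    (q : R) (hq : q * q = q)
    (Nb : R → R)
    (hNmem : ∀ x ∈ I, Nb x ∈ I)
    (hNadd : ∀ x ∈ I, ∀ y ∈ I, Nb (x + y) = Nb x + Nb y)
    (hNnij : ∀ x ∈ I, ∀ y ∈ I, Nb (Nb x * y - Nb (x * y) + x * Nb y) = Nb x * Nb y)
    (hNq1 : ∀ x ∈ I, Nb (x * q) = Nb x * q)
    (hNq2 : ∀ x ∈ I, Nb (q * x) = q * Nb x) :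
    ∀ x ∈ I, ∀ y ∈ I,
      letI N : R → R := liftN q Nb
      letI u : R := q + x
      letI v : R := q + y
      u * v - q ∈ I ∧
      (N u * v - N (u * v) + u * N v) - q ∈ I ∧
      N (N u * v - N (u * v) + u * N v) = N u * N v := by
  intro x hx y hy
  have hxy : x * y ∈ I := hIl x y hy
  have hB : Nb x * y - Nb (x * y) + x * Nb y ∈ I :=
    I.add_mem (I.sub_mem (hIl _ _ hy) (hNmem _ hxy)) (hIl _ _ (hNmem y hy))
  simp only [liftN_nijenhuis_expr hIl hIr hq hNadd hNq1 hNq2 hx hy]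
  refine ⟨?_, ?_, ?_⟩
  · rw [idem_add_mul_idem_add hq, add_sub_cancel_left]
    exact idem_mul_add_mul_idem_add_mem hIl hIr q hx hy hxy
  · rw [add_sub_cancel_left]
    exact idem_mul_add_mul_idem_add_mem hIl hIr q hx hy hB
  · rw [liftN_idem_add, liftN_idem_add, liftN_idem_add,
      map_idem_mul_add_mul_idem_add hIl hIr hNadd hNq1 hNq2 hx hy hB, hNnij x hx y hy,
      idem_add_mul_idem_add hq]
end

section
/- Let a,b,c ∈ ℤ satisfy ac = b(b−1), and equip ℤ with the heap operation [x,y,z] = x − y + z and the commutative truss multiplication m·n = amn + b(m + n) + c. For p,q ∈ ℤ let N(m) = pm + q. Then: (i) the 0-Nijenhuis torsion of N is constant, equal to −cp² + ((2b−1)q + 2c)p − aq² − (2b−1)q − c, so N is a Nijenhuis operator if and only if −cp² + ((2b−1)q + 2c)p − aq² − (2b−1)q − c = 0; (ii) if c ≠ 0, then N is a Nijenhuis operator if and only if cp = bq + c or cp = (b−1)q + c; (iii) if c = 0, then N is a Nijenhuis operator if and only if q = 0 or (2b−1)(p−1) = aq. -/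
/-!
For affine `N` the torsion is a polynomial in `m, n` whose dependence on `m` and `n` cancels
identically. Multiplying the constant by `c` and using `ac = b(b - 1)` to replace `acq²`, it
factors as `-(cp - bq - c)(cp - (b - 1)q - c)`; when `c = 0` it is `q((2b - 1)(p - 1) - aq)`.
-/

def zmul (a b c m n : ℤ) : ℤ := a * m * n + b * (m + n) + c

section IntegerTruss

variable (a b c : ℤ)

def nijenhuisProduct (N : ℤ → ℤ) (m n : ℤ) : ℤ :=
  zmul a b c (N m) n - N (zmul a b c m n) + zmul a b c m (N n)

def nijenhuisTorsion (N : ℤ → ℤ) (m n : ℤ) : ℤ :=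
  N (nijenhuisProduct a b c N m n) - zmul a b c (N m) (N n)

def IsNijenhuis (N : ℤ → ℤ) : Prop :=
  ∀ m n : ℤ, N (nijenhuisProduct a b c N m n) = zmul a b c (N m) (N n)

theorem isNijenhuis_iff_forall_nijenhuisTorsion_eq_zero (N : ℤ → ℤ) :
    IsNijenhuis a b c N ↔ ∀ m n : ℤ, nijenhuisTorsion a b c N m n = 0 := by
  simp only [IsNijenhuis, nijenhuisTorsion, sub_eq_zero]

variable (p q : ℤ)

def affineTorsion : ℤ :=
  -c * p ^ 2 + ((2 * b - 1) * q + 2 * c) * p - a * q ^ 2 - (2 * b - 1) * q - c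

theorem nijenhuisTorsion_affine (m n : ℤ) :
    nijenhuisTorsion a b c (fun m => p * m + q) m n = affineTorsion a b c p q := by
  simp only [nijenhuisTorsion, nijenhuisProduct, zmul, affineTorsion]
  ring

theorem isNijenhuis_affine_iff :
    IsNijenhuis a b c (fun m => p * m + q) ↔ affineTorsion a b c p q = 0 := by
  simp only [isNijenhuis_iff_forall_nijenhuisTorsion_eq_zero, nijenhuisTorsion_affine,
    forall_const]

variable {a b c}

theorem mul_affineTorsion (h : a * c = b * (b - 1)) :
    c * affineTorsion a b c p q = -((c * p - (b * q + c)) * (c * p - ((b - 1) * q + c))) := by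
  unfold affineTorsion
  linear_combination (-q ^ 2) * h

theorem affineTorsion_eq_zero_iff_of_ne_zero (h : a * c = b * (b - 1)) (hc : c ≠ 0) :
    affineTorsion a b c p q = 0 ↔ c * p = b * q + c ∨ c * p = (b - 1) * q + c := by
  rw [← mul_right_inj' hc, mul_zero, mul_affineTorsion p q h, neg_eq_zero, mul_eq_zero,
    sub_eq_zero, sub_eq_zero]

theorem affineTorsion_zero_eq_zero_iff :
    affineTorsion a b 0 p q = 0 ↔ q = 0 ∨ (2 * b - 1) * (p - 1) = a * q := by
  have hfactor : affineTorsion a b 0 p q = q * ((2 * b - 1) * (p - 1) - a * q) := by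
    unfold affineTorsion
    ring
  rw [hfactor, mul_eq_zero, sub_eq_zero]

end IntegerTruss

/-- Let `a, b, c ∈ ℤ` with `ac = b(b−1)`, equip `ℤ` with the truss
multiplication `m·n = amn + b(m+n) + c`, and let `N(m) = pm + q`. Then: (i) the
`0`-Nijenhuis torsion of `N` is constant equal to
`−cp² + ((2b−1)q + 2c)p − aq² − (2b−1)q − c`, so `N` is a Nijenhuis operator iff this
expression vanishes; (ii) if `c ≠ 0`, `N` is Nijenhuis iff `cp = bq + c` or
`cp = (b−1)q + c`; (iii) if `c = 0`, `N` is Nijenhuis iff `q = 0` or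
`(2b−1)(p−1) = aq`. -/
theorem nijenhuis_operators_on_integer_trusses (a b c : ℤ) (h : a * c = b * (b - 1))
    (p q : ℤ) :
    letI N : ℤ → ℤ := fun m => p * m + q
    letI circ : ℤ → ℤ → ℤ :=
      fun m n => zmul a b c (N m) n - N (zmul a b c m n) + zmul a b c m (N n)
    letI tor : ℤ → ℤ → ℤ := fun m n => N (circ m n) - zmul a b c (N m) (N n)
    letI E : ℤ := -c * p ^ 2 + ((2 * b - 1) * q + 2 * c) * p
      - a * q ^ 2 - (2 * b - 1) * q - c
    letI isNij : Prop := ∀ m n : ℤ, N (circ m n) = zmul a b c (N m) (N n)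
    (∀ m n : ℤ, tor m n = E) ∧
    (isNij ↔ E = 0) ∧
    (c ≠ 0 → (isNij ↔ c * p = b * q + c ∨ c * p = (b - 1) * q + c)) ∧
    (c = 0 → (isNij ↔ q = 0 ∨ (2 * b - 1) * (p - 1) = a * q)) := by
  have hNij := isNijenhuis_affine_iff a b c p q
  refine ⟨nijenhuisTorsion_affine a b c p q, hNij,
    fun hc => hNij.trans (affineTorsion_eq_zero_iff_of_ne_zero p q h hc), ?_⟩
  rintro rfl
  exact hNij.trans (affineTorsion_zero_eq_zero_iff p q)
end

section
/- Let F be a field, A an associative F-algebra, and N_1, …, N_n pairwise compatible affine Nijenhuis operators on A. Then for all λ_1, …, λ_n ∈ F with λ_1 + ⋯ + λ_n = 1, the map N = λ_1 N_1 + ⋯ + λ_n N_n (N(a) = Σ_i λ_i·N_i(a)) is an affine Nijenhuis operator on A. -/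
section Affine

variable (F : Type*) [Field F] {A : Type*} [NonUnitalRing A] [Module F A]
  [SMulCommClass F A A] [IsScalarTower F A A]

/-- A heap endomorphism of an abelian group: `N(a − b + c) = N(a) − N(b) + N(c)`. -/
def IsHeapEndoAdd {A : Type*} [AddCommGroup A] (N : A → A) : Prop :=
  ∀ a b c : A, N (a - b + c) = N a - N b + N c

/-- An affine map: a heap endomorphism preserving barycentric combinations. -/
def IsAffineMap {A : Type*} [AddCommGroup A] [Module F A] (N : A → A) : Prop :=
  IsHeapEndoAdd N ∧
    ∀ (l : F) (a b : A), N ((1 - l) • a + l • b) = (1 - l) • N a + l • N b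

/-- The Nijenhuis product `a ∘_N b = N(a)b − N(ab) + aN(b)`. -/
def anijProd {A : Type*} [NonUnitalRing A] (N : A → A) (a b : A) : A :=
  N a * b - N (a * b) + a * N b

/-- An affine Nijenhuis operator: an affine map with `N(a ∘_N b) = N(a)N(b)`. -/
def IsAffineNijenhuis (N : A → A) : Prop :=
  IsAffineMap F N ∧ ∀ a b : A, N (anijProd N a b) = N a * N b

/-- Compatibility of heap endomorphisms:
`N₁(a)N₂(b) = N₁(a ∘_{N₂} b) − N₂(a)N₁(b) + N₂(a ∘_{N₁} b)`. -/
def AreCompatibleAdd {A : Type*} [NonUnitalRing A] (N₁ N₂ : A → A) : Prop :=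
  ∀ a b : A,
    N₁ a * N₂ b = N₁ (anijProd N₂ a b) - N₂ a * N₁ b + N₂ (anijProd N₁ a b)

end Affine

/-! The combination `N = ∑ λᵢNᵢ` is affine since affinity is preserved by weighted sums, and
`∘_N` is the same weighted sum of the `∘_{Nᵢ}`. Since `∑ λᵢ = 1`, each affine `Nⱼ` commutes with the
barycentric combination `∑ λᵢ (a ∘_{Nᵢ} b)`, so `N(a ∘_N b) − N(a)N(b) = ∑ᵢⱼ λᵢλⱼ Dᵢⱼ` with
`Dᵢⱼ = Nⱼ(a ∘_{Nᵢ} b) − Nᵢ(a)Nⱼ(b)`. The Nijenhuis identity gives `Dᵢᵢ = 0` and compatibility gives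
`Dᵢⱼ + Dⱼᵢ = 0`, so the double sum vanishes. -/

open Finset

theorem Finset.sum_sum_eq_zero_of_antisymm {ι M : Type*} [AddCommMonoid M] (s : Finset ι)
    (f : ι → ι → M) (hdiag : ∀ i ∈ s, f i i = 0)
    (hanti : ∀ i ∈ s, ∀ j ∈ s, i ≠ j → f i j + f j i = 0) :
    ∑ i ∈ s, ∑ j ∈ s, f i j = 0 := by
  rw [← sum_product']
  refine sum_involution (fun p _ => p.swap) (fun ⟨i, j⟩ hij => ?_) (fun ⟨i, j⟩ hij hp heq => ?_)
    (fun p hp => mem_product.mpr (mem_product.mp hp).symm) (fun p _ => p.swap_swap)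
  all_goals obtain ⟨hi, hj⟩ := mem_product.mp hij
  · rcases eq_or_ne i j with rfl | hne
    · simp [hdiag i hi]
    · exact hanti i hi j hj hne
  · obtain rfl : j = i := congrArg Prod.fst heq
    exact hp (hdiag j hj)

section AffineMap

variable {F A : Type*} [Field F] [AddCommGroup A] [Module F A]

theorem IsAffineMap.exists_linearMap_add_const {N : A → A} (hN : IsAffineMap F N) :
    ∃ (f : A →ₗ[F] A) (c : A), ∀ a, N a = f a + c := by
  obtain ⟨hheap, hbar⟩ := hN
  refine ⟨{ toFun := fun a => N a - N 0, map_add' := fun a b => ?_, map_smul' := fun t b => ?_ },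
    N 0, fun a => (sub_add_cancel _ _).symm⟩
  · have := hheap a 0 b
    rw [sub_zero] at this
    rw [this]; abel
  · have := hbar t 0 b
    rw [smul_zero, zero_add] at this
    simp only [this, RingHom.id_apply, smul_sub, sub_smul, one_smul]; abel

theorem IsAffineMap.map_sum_smul {ι : Type*} {N : A → A} (hN : IsAffineMap F N)
    {s : Finset ι} {l : ι → F} (hl : ∑ i ∈ s, l i = 1) (x : ι → A) :
    N (∑ i ∈ s, l i • x i) = ∑ i ∈ s, l i • N (x i) := by
  obtain ⟨f, c, hf⟩ := hN.exists_linearMap_add_const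
  simp only [hf, map_sum, map_smul, smul_add, sum_add_distrib, ← sum_smul, hl, one_smul]

theorem isAffineMap_sum_smul {ι : Type*} (s : Finset ι) {N : ι → A → A}
    (hN : ∀ i ∈ s, IsAffineMap F (N i)) (l : ι → F) :
    IsAffineMap F (fun a => ∑ i ∈ s, l i • N i a) := by
  refine ⟨fun a b c => ?_, fun t a b => ?_⟩
  · simp only [← sum_sub_distrib, ← sum_add_distrib, ← smul_sub, ← smul_add]
    exact sum_congr rfl fun i hi => by rw [(hN i hi).1 a b c]
  · simp only [smul_sum, ← sum_add_distrib]
    refine sum_congr rfl fun i hi => ?_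
    rw [(hN i hi).2 t a b, smul_add, smul_comm (l i) (1 - t), smul_comm (l i) t]

end AffineMap

theorem AreCompatibleAdd.map_anijProd_add_map_anijProd {A : Type*} [NonUnitalRing A]
    {N₁ N₂ : A → A} (h : AreCompatibleAdd N₁ N₂) (a b : A) :
    N₂ (anijProd N₁ a b) + N₁ (anijProd N₂ a b) = N₁ a * N₂ b + N₂ a * N₁ b := by
  rw [h a b]; abel

section NijenhuisProduct

variable {ι F A : Type*} [Field F] [NonUnitalRing A] [Module F A] [SMulCommClass F A A]
  [IsScalarTower F A A]

theorem anijProd_sum_smul (s : Finset ι) (N : ι → A → A) (l : ι → F) (a b : A) :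
    anijProd (fun a => ∑ i ∈ s, l i • N i a) a b = ∑ i ∈ s, l i • anijProd (N i) a b := by
  simp only [anijProd, sum_mul, mul_sum, smul_mul_assoc, mul_smul_comm, smul_sub, smul_add,
    sum_sub_distrib, sum_add_distrib]

theorem map_anijProd_sum_smul_eq_mul (s : Finset ι) {N : ι → A → A}
    (haff : ∀ i ∈ s, IsAffineMap F (N i))
    (hnij : ∀ i ∈ s, ∀ a b, N i (anijProd (N i) a b) = N i a * N i b)
    (hcomp : ∀ i ∈ s, ∀ j ∈ s, i ≠ j → AreCompatibleAdd (N i) (N j)) {l : ι → F}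
    (hl : ∑ i ∈ s, l i = 1) (a b : A) :
    ∑ j ∈ s, l j • N j (anijProd (fun a => ∑ i ∈ s, l i • N i a) a b) =
      (∑ i ∈ s, l i • N i a) * ∑ j ∈ s, l j • N j b := by
  rw [anijProd_sum_smul, ← sub_eq_zero]
  calc ∑ j ∈ s, l j • N j (∑ i ∈ s, l i • anijProd (N i) a b)
        - (∑ i ∈ s, l i • N i a) * ∑ j ∈ s, l j • N j b
      = ∑ i ∈ s, ∑ j ∈ s, (l i * l j) • (N j (anijProd (N i) a b) - N i a * N j b) := by
        rw [sum_congr rfl fun j hj => congrArg (l j • ·) ((haff j hj).map_sum_smul hl _)]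
        simp only [smul_sum, sum_mul_sum, smul_mul_smul_comm, smul_sub, sum_sub_distrib,
          smul_smul]
        rw [sum_comm]
        simp only [mul_comm]
    _ = 0 := by
        refine sum_sum_eq_zero_of_antisymm s _
          (fun i hi => by rw [hnij i hi, sub_self, smul_zero]) fun i hi j hj hij => ?_
        rw [mul_comm (l j), ← smul_add, sub_add_sub_comm,
          (hcomp i hi j hj hij).map_anijProd_add_map_anijProd, sub_self, smul_zero]

end NijenhuisProduct

/-- Let `A` be an associative `F`-algebra and `N₁, …, Nₙ` pairwise
compatible affine Nijenhuis operators on `A`. Then for all `λ₁, …, λₙ ∈ F` with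
`λ₁ + ⋯ + λₙ = 1`, the barycentric combination `N = Σᵢ λᵢNᵢ` is an affine Nijenhuis
operator on `A`. -/
theorem barycentric_combination_of_affine_nijenhuis {F : Type*} [Field F] {A : Type*}
    [NonUnitalRing A] [Module F A] [SMulCommClass F A A] [IsScalarTower F A A]
    (n : ℕ) (N : Fin n → A → A)
    (hnij : ∀ i, IsAffineNijenhuis F (N i))
    (hcomp : ∀ i j, i ≠ j → AreCompatibleAdd (N i) (N j))
    (l : Fin n → F) (hl : ∑ i, l i = 1) :
    IsAffineNijenhuis F (fun a => ∑ i, l i • N i a) :=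
  ⟨isAffineMap_sum_smul univ (fun i _ => (hnij i).1) l,
    map_anijProd_sum_smul_eq_mul univ (fun i _ => (hnij i).1) (fun i _ => (hnij i).2)
      (fun i _ j _ => hcomp i j) hl⟩
end

section
/- Let F be a field, A an associative F-algebra, and P : A → A an affine map such that P(ab) = P(a)P(b) and P(P(a)) = P(a) for all a,b ∈ A. Then for every α ∈ F, the map N = (1−α)P + α·id (N(a) = (1−α)·P(a) + α·a) is an affine Nijenhuis operator on A. -/
section NijenhuisCombination

variable {F : Type*} [Field F] {A : Type*}

theorem IsHeapEndoAdd.smul_add_smul [AddCommGroup A] [Module F A] {P Q : A → A}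
    (hP : IsHeapEndoAdd P) (hQ : IsHeapEndoAdd Q) (s t : F) :
    IsHeapEndoAdd (fun a => s • P a + t • Q a) := by
  intro a b c
  simp only [hP a b c, hQ a b c]
  module

theorem IsAffineMap.smul_add_smul [AddCommGroup A] [Module F A] {P Q : A → A}
    (hP : IsAffineMap F P) (hQ : IsAffineMap F Q) (s t : F) :
    IsAffineMap F (fun a => s • P a + t • Q a) := by
  refine ⟨hP.1.smul_add_smul hQ.1 s t, fun l a b => ?_⟩
  simp only [hP.2, hQ.2]
  module

theorem isAffineMap_id [AddCommGroup A] [Module F A] : IsAffineMap F (id : A → A) :=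
  ⟨fun _ _ _ => rfl, fun _ _ _ => rfl⟩

theorem IsHeapEndoAdd.map_anijProd_of_mul_of_idem [NonUnitalRing A] {P : A → A}
    (hP : IsHeapEndoAdd P) (hmul : ∀ a b : A, P (a * b) = P a * P b)
    (hidem : ∀ a : A, P (P a) = P a) (a b : A) :
    P (anijProd P a b) = P a * P b := by
  simp only [anijProd, hP _ _ _, hmul, hidem, sub_add_cancel]

theorem isAffineNijenhuis_of_mul_of_idem [NonUnitalRing A] [Module F A] {P : A → A}
    (hP : IsAffineMap F P) (hmul : ∀ a b : A, P (a * b) = P a * P b)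
    (hidem : ∀ a : A, P (P a) = P a) : IsAffineNijenhuis F P :=
  ⟨hP, hP.1.map_anijProd_of_mul_of_idem hmul hidem⟩

section Algebra

variable [NonUnitalRing A] [Module F A] [SMulCommClass F A A] [IsScalarTower F A A]

theorem anijProd_one_sub_smul_add_smul_id (P : A → A) (α : F) (a b : A) :
    anijProd (fun a => (1 - α) • P a + α • a) a b = (1 - α) • anijProd P a b + α • (a * b) := by
  simp only [anijProd, add_mul, mul_add, smul_mul_assoc, mul_smul_comm]
  module

/-- Affine analogue of the classical fact that `s • P + t • id` is Nijenhuis whenever `P` is;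
since the weights sum to `1`, affinity of `P` lets it pass through
`(1 - α) • (a ∘_P b) + α • (a * b)`. -/
theorem IsAffineNijenhuis.one_sub_smul_add_smul_id {P : A → A} (hP : IsAffineNijenhuis F P)
    (α : F) : IsAffineNijenhuis F (fun a => (1 - α) • P a + α • a) := by
  refine ⟨hP.1.smul_add_smul isAffineMap_id (1 - α) α, fun a b => ?_⟩
  beta_reduce
  rw [anijProd_one_sub_smul_add_smul_id, hP.1.2, hP.2]
  simp only [anijProd, add_mul, mul_add, smul_mul_assoc, mul_smul_comm]
  module

end Algebra

end NijenhuisCombination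

/-- Let `A` be an associative `F`-algebra and `P : A → A` an affine
map with `P(ab) = P(a)P(b)` and `P(P(a)) = P(a)`. Then for every `α ∈ F` the map
`N = (1−α)P + α·id` is an affine Nijenhuis operator on `A`. -/
theorem affine_idempotent_combination_is_nijenhuis {F : Type*} [Field F] {A : Type*}
    [NonUnitalRing A] [Module F A] [SMulCommClass F A A] [IsScalarTower F A A]
    (P : A → A) (hP : IsAffineMap F P)
    (hmul : ∀ a b : A, P (a * b) = P a * P b)
    (hidem : ∀ a : A, P (P a) = P a) (α : F) :
    IsAffineNijenhuis F (fun a => (1 - α) • P a + α • a) := by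
  exact (isAffineNijenhuis_of_mul_of_idem hP hmul hidem).one_sub_smul_add_smul_id α
end
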